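/- For every i ∈ ℕ, every p ∈ [0,1], every n ∈ ℕ, every m ∈ ℤ_n with n − m ≤ 2i, and every sample point ω ∈ Ω, the oriented percolation process and the i-th strengthened process agree at (n,m): _pX^{(∞)}_n(m)(ω) = _pX^{(i)}_n(m)(ω). That is, no site (n,m) with n − m ≤ 2i is ever infected by force, and all such sites have the same infection state in both processes. -/

import Mathlib

open MeasureTheory ProbabilityTheory Filter Set
open scoped ENat ENNReal

noncomputable section

/-- Direction of a bond: `true` = right (`+1`), `false` = left (`-1`). -/
def dir (j : Bool) : ℤ := if j then 1 else -1

/-- An environment: a realization of the family of uniform random variables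
`ξ^j_{n,m}`, indexed by time `n`, space `m` and direction `j`. -/
abbrev Env := ℕ → ℤ → Bool → ℝ

/-- The bond from site `(n,m)` in direction `j` is open at level `p`,
i.e. the Bernoulli variable `_pξ^j_{n,m} = 1_{ξ^j_{n,m} ≤ p}` equals `1`. -/
def bondOpen (p : ℝ) (u : Env) (n : ℕ) (m : ℤ) (j : Bool) : Bool :=
  @decide (u n m j ≤ p) (Classical.propDecidable _)

/-- The position of the right edge after one step from configuration `c` at time `n`:
`sup { m + j : c m = 1, bond (n,m,j) open }`. -/
def nextEdge (p : ℝ) (u : Env) (n : ℕ) (c : ℤ → Bool) : ℤ :=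
  sSup {x : ℤ | ∃ m j, c m = true ∧ bondOpen p u n m j = true ∧ x = m + dir j}

/-- Forced (re)infection indicator for a site lying at (even) distance `d`
behind the new edge, when `d > 2i`; for `i = ∞` there is no forced infection. -/
def forced (i : ℕ∞) (d : ℤ) : Bool :=
  @decide (Even d ∧ 2 * i < (d.toNat : ℕ∞)) (Classical.propDecidable _)

/-- The strengthened discrete-time contact process (SDTCP) of order `i ∈ ℕ ∪ {∞}`,
with infection parameter `p`, environment `u`, and initial configuration `η`. -/
def Xproc (i : ℕ∞) (p : ℝ) (u : Env) (η : ℤ → Bool) : ℕ → ℤ → Bool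
  | 0 => η
  | n + 1 => fun m =>
      (Xproc i p u η n (m - 1) && bondOpen p u n (m - 1) true) ||
      (Xproc i p u η n (m + 1) && bondOpen p u n (m + 1) false) ||
      forced i (nextEdge p u n (Xproc i p u η n) - m)

/-- The right edge process, with the convention `edge 0 = 0`. -/
def edge (i : ℕ∞) (p : ℝ) (u : Env) (η : ℤ → Bool) : ℕ → ℤ
  | 0 => 0
  | n + 1 => nextEdge p u n (Xproc i p u η n)

/-- The standard initial configuration `1_{· ≤ 0}` on the even sites. -/
def η₀ : ℤ → Bool := fun m => @decide (m ≤ 0 ∧ Even m) (Classical.propDecidable _)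

/-- States of the induced Markov chain of order `i`: configurations of the `i`
sites at distances `2, 4, …, 2i` behind the right edge. -/
abbrev IMCState (i : ℕ) := Fin i → Bool

/-- The induced Markov chain: `Y n (j) = X n (edge n − 2(j+1))`. -/
def Yproc (i : ℕ) (p : ℝ) (u : Env) (η : ℤ → Bool) (n : ℕ) : IMCState i :=
  fun j => Xproc (i : ℕ∞) p u η n (edge (i : ℕ∞) p u η n - 2 * ((j : ℤ) + 1))

/-- The initial configuration `η_σ` associated with a state `σ` of the induced
Markov chain: edge at `0`, configuration `σ` at `−2, …, −2i`, everything
infected below `−2i`, everything healthy above `0`. -/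
def ησ (i : ℕ) (σ : IMCState i) : ℤ → Bool := fun m =>
  @decide (Even m ∧ (m = 0 ∨ m < -(2 * (i : ℤ)) ∨
      ∃ j : Fin i, m = -(2 * ((j : ℤ) + 1)) ∧ σ j = true))
    (Classical.propDecidable _)

variable {Ω : Type*}

/-- The probabilistic set-up: `ℙ` is a probability measure and the `ξ^j_{n,m}`
are i.i.d. random variables, uniformly distributed on `[0,1]`. -/
def UniformBonds [MeasureSpace Ω] (ξ : Ω → Env) : Prop :=
  IsProbabilityMeasure (ℙ : Measure Ω) ∧
  (∀ n m j, Measurable fun ω => ξ ω n m j) ∧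
  iIndepFun (m := fun _ : ℕ × ℤ × Bool => (inferInstance : MeasurableSpace ℝ))
    (fun v ω => ξ ω v.1 v.2.1 v.2.2) ℙ ∧
  ∀ n m j, (ℙ : Measure Ω).map (fun ω => ξ ω n m j)
      = (volume : Measure ℝ).restrict (Set.Icc 0 1)

/-- Transition probability `q^{(i)}_{στ}(p)` of the induced Markov chain:
the probability that one step of the chain started from state `σ` leads to `τ`. -/
def kernel [MeasureSpace Ω] (ξ : Ω → Env) (i : ℕ) (p : ℝ) (σ τ : IMCState i) : ℝ :=
  (ℙ {ω | Yproc i p (ξ ω) (ησ i σ) 1 = τ}).toReal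

/-- `π` is a stationary probability distribution for the induced Markov chain. -/
def IsStationaryDist [MeasureSpace Ω] (ξ : Ω → Env) (i : ℕ) (p : ℝ)
    (π : IMCState i → ℝ) : Prop :=
  (∀ σ, 0 ≤ π σ) ∧ (∑ σ, π σ = 1) ∧
    ∀ τ, (∑ σ, π σ * kernel ξ i p σ τ) = π τ

/-- The mean jump `M^{(i)}_σ(p)` of the right edge from state `σ`
(Definition 2.4): `Σ_k Σ_τ (1 − 2k) P^{(i)}_{(σ,τ,k)}(p)`. -/
def meanJump [MeasureSpace Ω] (ξ : Ω → Env) (i : ℕ) (p : ℝ) (σ : IMCState i) : ℝ :=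
  ∑' k : ℕ, ∑ τ : IMCState i, (1 - 2 * (k : ℝ)) *
    (ℙ {ω | edge (i : ℕ∞) p (ξ ω) (ησ i σ) 1 = 1 - 2 * (k : ℤ) ∧
        Yproc i p (ξ ω) (ησ i σ) 1 = τ}).toReal

/-- The mean edge drift `M^{(i)}(p)` computed from a stationary measure `π`
(Definition 2.5). -/
def meanDrift [MeasureSpace Ω] (ξ : Ω → Env) (i : ℕ) (p : ℝ)
    (π : IMCState i → ℝ) : ℝ :=
  ∑ σ, meanJump ξ i p σ * π σ

/-- `a ∈ ℝ ∪ {±∞}` is the almost sure asymptotic speed of the right edge of the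
process of order `i ∈ ℕ ∪ {∞}` started from `1_{· ≤ 0}`. -/
def IsEdgeSpeed [MeasureSpace Ω] (ξ : Ω → Env) (i : ℕ∞) (p : ℝ) (a : EReal) : Prop :=
  ∀ᵐ ω ∂ℙ, Tendsto (fun n : ℕ => (((edge i p (ξ ω) η₀ n : ℤ) : ℝ) / n : EReal))
    atTop (nhds a)

/-- `pc i = p_c^{(i)}` is, for each `i ∈ ℕ`, a root in `(0,1]` of the mean edge
drift `M^{(i)}` (computed from a stationary measure of the induced chain). -/
def IsCriticalSeq [MeasureSpace Ω] (ξ : Ω → Env) (pc : ℕ → ℝ) : Prop :=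
  ∀ i, pc i ∈ Set.Ioc (0 : ℝ) 1 ∧
    ∃ π, IsStationaryDist ξ i (pc i) π ∧ meanDrift ξ i (pc i) π = 0

/-!
Nothing is ever infected to the right of the light cone `m ≤ n`, so the new edge after step `n`
is at most `n + 1`. Hence a site with `n + 1 - m ≤ 2i` lies within `2i` of the edge and is never
infected by force; below the diagonal `n - m ≤ 2i` both processes therefore apply the same
percolation update to the same (inductively equal) configurations.
-/

lemma forced_eq_false_of_toNat_le {i : ℕ∞} {d : ℤ} (hd : (d.toNat : ℕ∞) ≤ 2 * i) :
    forced i d = false := by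
  unfold forced
  rw [decide_eq_false_iff_not]
  exact fun h => (not_lt.mpr hd) h.2

lemma forced_top (d : ℤ) : forced ⊤ d = false :=
  forced_eq_false_of_toNat_le (by simp [ENat.mul_top])

lemma forced_eq_false_of_le {i : ℕ} {d : ℤ} (hd : d ≤ 2 * (i : ℤ)) :
    forced (i : ℕ∞) d = false := by
  refine forced_eq_false_of_toNat_le ?_
  exact_mod_cast (show d.toNat ≤ 2 * i by omega)

lemma pos_of_forced_eq_true {i : ℕ∞} {d : ℤ} (h : forced i d = true) : 0 < d := by
  by_contra! hd
  rw [forced_eq_false_of_toNat_le (by simp [Int.toNat_of_nonpos hd])] at h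
  exact Bool.false_ne_true h

-- `hN` is needed because `nextEdge` is `sSup ∅ = 0` when no open bond leaves an infected site.
lemma nextEdge_le_of_forall_le {p : ℝ} {u : Env} {n : ℕ} {c : ℤ → Bool} {N : ℤ}
    (hN : 0 ≤ N + 1) (hc : ∀ m, c m = true → m ≤ N) : nextEdge p u n c ≤ N + 1 := by
  unfold nextEdge
  rcases Set.eq_empty_or_nonempty
    {x : ℤ | ∃ m j, c m = true ∧ bondOpen p u n m j = true ∧ x = m + dir j} with h | h
  · rw [h, Int.csSup_empty]
    exact hN
  · refine csSup_le h ?_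
    rintro x ⟨m, j, hm, -, rfl⟩
    have hdir : dir j ≤ 1 := by cases j <;> simp [dir]
    linarith [hc m hm]

section LightCone

variable {i : ℕ∞} {p : ℝ} {u : Env} {η : ℤ → Bool}

lemma le_of_Xproc_eq_true (hη : ∀ m, η m = true → m ≤ 0) {n : ℕ} {m : ℤ}
    (h : Xproc i p u η n m = true) : m ≤ n := by
  induction n generalizing m with
  | zero => exact hη m h
  | succ n ih =>
    have hedge : nextEdge p u n (Xproc i p u η n) ≤ (n : ℤ) + 1 :=
      nextEdge_le_of_forall_le (by positivity) fun _ => ih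
    simp only [Xproc, Bool.or_eq_true, Bool.and_eq_true] at h
    rcases h with (⟨hleft, -⟩ | ⟨hright, -⟩) | hforced
    · push_cast; linarith [ih hleft]
    · push_cast; linarith [ih hright]
    · push_cast; linarith [pos_of_forced_eq_true hforced]

lemma nextEdge_Xproc_le (hη : ∀ m, η m = true → m ≤ 0) (n : ℕ) :
    nextEdge p u n (Xproc i p u η n) ≤ (n : ℤ) + 1 :=
  nextEdge_le_of_forall_le (by positivity) fun _ => le_of_Xproc_eq_true hη

end LightCone

section NearDiagonal

variable {i : ℕ} {p : ℝ} {u : Env} {η : ℤ → Bool}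

lemma forced_nextEdge_Xproc_eq_false (hη : ∀ m, η m = true → m ≤ 0) {n : ℕ} {m : ℤ}
    (hm : (n : ℤ) + 1 - m ≤ 2 * i) :
    forced (i : ℕ∞) (nextEdge p u n (Xproc (i : ℕ∞) p u η n) - m) = false := by
  have hedge : nextEdge p u n (Xproc (i : ℕ∞) p u η n) ≤ (n : ℤ) + 1 := nextEdge_Xproc_le hη n
  exact forced_eq_false_of_le (by linarith)

lemma Xproc_top_eq_Xproc (hη : ∀ m, η m = true → m ≤ 0) {n : ℕ} {m : ℤ}
    (hm : (n : ℤ) - m ≤ 2 * i) : Xproc ⊤ p u η n m = Xproc (i : ℕ∞) p u η n m := by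
  induction n generalizing m with
  | zero => rfl
  | succ n ih =>
    push_cast at hm
    simp only [Xproc]
    rw [ih (by linarith), ih (by linarith), forced_top,
      forced_nextEdge_Xproc_eq_false hη (by linarith)]

end NearDiagonal

lemma le_zero_of_η₀_eq_true {m : ℤ} (h : η₀ m = true) : m ≤ 0 :=
  (@of_decide_eq_true _ (Classical.propDecidable _) h).1

theorem agree_near_diagonal_general (u : Env)
    (i : ℕ) (p : ℝ) :
    (∀ (n : ℕ) (m : ℤ), Even ((n : ℤ) + m) → (n : ℤ) - m ≤ 2 * i →
      Xproc ⊤ p u η₀ n m = Xproc (i : ℕ∞) p u η₀ n m) ∧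
    (∀ (n : ℕ) (m : ℤ), Even (((n : ℤ) + 1) + m) → ((n : ℤ) + 1) - m ≤ 2 * i →
      forced (i : ℕ∞) (nextEdge p u n (Xproc (i : ℕ∞) p u η₀ n) - m) = false) :=
  ⟨fun _ _ _ hm => Xproc_top_eq_Xproc (fun _ => le_zero_of_η₀_eq_true) hm,
    fun _ _ _ hm => forced_nextEdge_Xproc_eq_false (fun _ => le_zero_of_η₀_eq_true) hm⟩

/-- For every `i ∈ ℕ`, every `p ∈ [0,1]`, every environment (sample point) `u`,
and every site `(n,m)` of the correct parity with `n − m ≤ 2i`, the oriented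
percolation process and the `i`-th strengthened process agree at `(n,m)`;
moreover no such site is ever infected by force. -/
theorem agree_near_diagonal (u : Env) (hu : ∀ n m j, u n m j ∈ Set.Icc (0 : ℝ) 1)
    (i : ℕ) (p : ℝ) (hp : p ∈ Set.Icc (0 : ℝ) 1) :
    (∀ (n : ℕ) (m : ℤ), Even ((n : ℤ) + m) → (n : ℤ) - m ≤ 2 * i →
      Xproc ⊤ p u η₀ n m = Xproc (i : ℕ∞) p u η₀ n m) ∧
    (∀ (n : ℕ) (m : ℤ), Even (((n : ℤ) + 1) + m) → ((n : ℤ) + 1) - m ≤ 2 * i →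
      forced (i : ℕ∞) (nextEdge p u n (Xproc (i : ℕ∞) p u η₀ n) - m) = false) :=
  agree_near_diagonal_general u i p
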